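/- Let p ∈ (0, 1/2) and let K be a p-core CRG all of whose vertices are black. Suppose v_1, …, v_ℓ are distinct vertices of K, pairwise joined by gray edges, such that every vertex of K outside {v_1,…,v_ℓ} is joined by a white edge to at least one of v_1, …, v_ℓ (that is, {v_1,…,v_ℓ} is a maximal gray clique). Then g_K(p) > p/ℓ. -/

import Mathlib

/-- Colors for edges of a colored regularity graph. -/
inductive EColor : Type
  | white
  | gray
  | black
deriving DecidableEq

/-- A colored regularity graph (CRG) on a finite vertex type `V`: each vertex is
white or black (`vWhite v = true` means white), and each pair of distinct vertices
gets a symmetric edge color (white, gray or black). -/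
structure CRG (V : Type) [Fintype V] where
  vWhite : V → Bool
  ecolor : V → V → EColor
  ecolor_symm : ∀ u v, ecolor u v = ecolor v u

namespace CRG

variable {V : Type} [Fintype V] [DecidableEq V]

/-- The matrix `M_K(p)`. -/
noncomputable def M (K : CRG V) (p : ℝ) (u v : V) : ℝ :=
  if u = v then (if K.vWhite u then p else 1 - p)
  else
    match K.ecolor u v with
    | EColor.white => p
    | EColor.black => 1 - p
    | EColor.gray => 0

/-- The function `g_K(p)`: the minimum of `xᵀ M_K(p) x` over nonnegative weight
vectors summing to `1`. -/
noncomputable def g (K : CRG V) (p : ℝ) : ℝ :=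
  sInf {r : ℝ | ∃ x : V → ℝ, (∀ v, 0 ≤ x v) ∧ (∑ v, x v) = 1 ∧
    r = ∑ u, ∑ v, x u * K.M p u v * x v}

/-- The sub-CRG induced on a subset `s` of the vertices. -/
def sub (K : CRG V) (s : Finset V) : CRG {v // v ∈ s} where
  vWhite := fun v => K.vWhite v.1
  ecolor := fun u v => K.ecolor u.1 v.1
  ecolor_symm := fun u v => K.ecolor_symm u.1 v.1

/-- `K` is `p`-core if `g_K(p) < g_{K'}(p)` for every proper (nonempty) sub-CRG `K'`. -/
def IsPCore (K : CRG V) (p : ℝ) : Prop :=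
  ∀ s : Finset V, s.Nonempty → s ≠ Finset.univ → K.g p < (K.sub s).g p

/-- `x` is an optimal weight vector for `K` at `p`. -/
def IsOptWeight (K : CRG V) (p : ℝ) (x : V → ℝ) : Prop :=
  (∀ v, 0 ≤ x v) ∧ (∑ v, x v) = 1 ∧
    (∑ u, ∑ v, x u * K.M p u v * x v) = K.g p

/-- The gray degree `d_G(v)`: total weight of gray neighbors of `v`. -/
noncomputable def dG (K : CRG V) (x : V → ℝ) (v : V) : ℝ :=
  ∑ w ∈ Finset.univ.filter fun w => w ≠ v ∧ K.ecolor v w = EColor.gray, x w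

/-- The white degree `d_W(v)`: total weight of white neighbors of `v`, including `v`
itself if `v` is white. -/
noncomputable def dW (K : CRG V) (x : V → ℝ) (v : V) : ℝ :=
  (∑ w ∈ Finset.univ.filter fun w => w ≠ v ∧ K.ecolor v w = EColor.white, x w) +
    (if K.vWhite v then x v else 0)

/-- The black degree `d_B(v)`: total weight of black neighbors of `v`, including `v`
itself if `v` is black. -/
noncomputable def dB (K : CRG V) (x : V → ℝ) (v : V) : ℝ :=
  (∑ w ∈ Finset.univ.filter fun w => w ≠ v ∧ K.ecolor v w = EColor.black, x w) +
    (if K.vWhite v then 0 else x v)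

/-- The number of gray neighbors of `v`. -/
def grayDeg (K : CRG V) (v : V) : ℕ :=
  (Finset.univ.filter fun w => w ≠ v ∧ K.ecolor v w = EColor.gray).card

end CRG

/-- A graph `H` embeds in a CRG `K`, written `H ↦ K`. -/
def EmbedsIn {α : Type*} {V : Type} [Fintype V] (H : SimpleGraph α) (K : CRG V) : Prop :=
  ∃ φ : α → V,
    (∀ a b : α, H.Adj a b →
      (φ a = φ b ∧ K.vWhite (φ a) = false) ∨
      (φ a ≠ φ b ∧ (K.ecolor (φ a) (φ b) = EColor.black ∨ K.ecolor (φ a) (φ b) = EColor.gray))) ∧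
    (∀ a b : α, a ≠ b → ¬H.Adj a b →
      (φ a = φ b ∧ K.vWhite (φ a) = true) ∨
      (φ a ≠ φ b ∧ (K.ecolor (φ a) (φ b) = EColor.white ∨ K.ecolor (φ a) (φ b) = EColor.gray)))

/-!
Take an optimal weight vector `x`: it exists by compactness of the simplex, has full support
because `K` is `p`-core, and by first-order optimality every row sum `(M x)_v` equals `g_K(p)`.
Add up the rows of `v_1, …, v_ℓ`. Every vertex `w` is some `v_i` (a black diagonal entry
`1 - p ≥ p`) or is white-adjacent to some `v_i` (entry `p`), so it contributes at least
`p x_w`, and `v_1` contributes `(1 - p) x_{v_1} > p x_{v_1}`. Hence `ℓ g_K(p) > p ∑ x_w = p`.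
-/

open Finset Matrix Filter Topology

section QuadraticFormOnSimplex

variable {ι : Type*} [Fintype ι]

theorem exists_isMinOn_dotProduct_mulVec_stdSimplex [Nonempty ι] (A : Matrix ι ι ℝ) :
    ∃ x ∈ stdSimplex ℝ ι, IsMinOn (fun y => y ⬝ᵥ A *ᵥ y) (stdSimplex ℝ ι) x := by
  classical
  exact (isCompact_stdSimplex ℝ ι).exists_isMinOn
    ⟨_, single_mem_stdSimplex ℝ (Classical.arbitrary ι)⟩ (by fun_prop)

theorem Matrix.IsSymm.dotProduct_mulVec_comm {A : Matrix ι ι ℝ} (hA : A.IsSymm) (x y : ι → ℝ) :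
    x ⬝ᵥ A *ᵥ y = y ⬝ᵥ A *ᵥ x := by
  rw [dotProduct_mulVec, ← mulVec_transpose, hA.eq, dotProduct_comm]

theorem Matrix.IsSymm.dotProduct_mulVec_add_smul {A : Matrix ι ι ℝ} (hA : A.IsSymm) (x d : ι → ℝ)
    (t : ℝ) :
    (x + t • d) ⬝ᵥ A *ᵥ (x + t • d) =
      x ⬝ᵥ A *ᵥ x + t * (2 * (d ⬝ᵥ A *ᵥ x) + t * (d ⬝ᵥ A *ᵥ d)) := by
  simp only [mulVec_add, mulVec_smul, add_dotProduct, dotProduct_add, smul_dotProduct,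
    dotProduct_smul, smul_eq_mul, hA.dotProduct_mulVec_comm x d]
  ring

/-- First-order optimality: moving mass from `a` to `b` cannot decrease the form. -/
theorem Matrix.IsSymm.mulVec_apply_le_of_isMinOn_stdSimplex [DecidableEq ι] {A : Matrix ι ι ℝ}
    (hA : A.IsSymm) {x : ι → ℝ} (hx : x ∈ stdSimplex ℝ ι)
    (hmin : IsMinOn (fun y => y ⬝ᵥ A *ᵥ y) (stdSimplex ℝ ι) x) {a : ι} (ha : 0 < x a) (b : ι) :
    (A *ᵥ x) a ≤ (A *ᵥ x) b := by
  set d : ι → ℝ := Pi.single b 1 - Pi.single a 1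
  have hd : d ⬝ᵥ A *ᵥ x = (A *ᵥ x) b - (A *ᵥ x) a := by
    simp only [d, sub_dotProduct, single_dotProduct, one_mul]
  have hmem : ∀ t ∈ Set.Ioo 0 (x a), x + t • d ∈ stdSimplex ℝ ι := by
    rintro t ⟨ht0, hta⟩
    refine ⟨fun v => ?_, ?_⟩
    · simp only [d, Pi.add_apply, Pi.smul_apply, Pi.sub_apply, Pi.single_apply, smul_eq_mul]
      have := hx.1 v
      split_ifs <;> subst_vars <;> nlinarith
    · simp [d, sum_add_distrib, ← mul_sum, sum_sub_distrib, hx.2]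
  have hslope : ∀ t ∈ Set.Ioo 0 (x a), 0 ≤ 2 * (d ⬝ᵥ A *ᵥ x) + t * (d ⬝ᵥ A *ᵥ d) := by
    intro t ht
    have : x ⬝ᵥ A *ᵥ x ≤ (x + t • d) ⬝ᵥ A *ᵥ (x + t • d) := hmin (hmem t ht)
    rw [hA.dotProduct_mulVec_add_smul] at this
    exact nonneg_of_mul_nonneg_right (by linarith) ht.1
  have hlim : Tendsto (fun t => 2 * (d ⬝ᵥ A *ᵥ x) + t * (d ⬝ᵥ A *ᵥ d)) (𝓝[>] 0)
      (𝓝 (2 * (d ⬝ᵥ A *ᵥ x) + 0 * (d ⬝ᵥ A *ᵥ d))) :=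
    ((continuous_const.add (continuous_id.mul continuous_const)).tendsto 0).mono_left
      nhdsWithin_le_nhds
  have := ge_of_tendsto hlim (by filter_upwards [Ioo_mem_nhdsGT ha] using hslope)
  linarith

theorem Matrix.IsSymm.mulVec_apply_eq_of_isMinOn_stdSimplex [DecidableEq ι] {A : Matrix ι ι ℝ}
    (hA : A.IsSymm) {x : ι → ℝ} (hx : x ∈ stdSimplex ℝ ι)
    (hmin : IsMinOn (fun y => y ⬝ᵥ A *ᵥ y) (stdSimplex ℝ ι) x) {a : ι} (ha : 0 < x a) :
    (A *ᵥ x) a = x ⬝ᵥ A *ᵥ x := by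
  have hterm : ∀ u, x u * (A *ᵥ x) u = x u * (A *ᵥ x) a := fun u => by
    rcases (hx.1 u).eq_or_lt with hu | hu
    · rw [← hu, zero_mul, zero_mul]
    · rw [le_antisymm (hA.mulVec_apply_le_of_isMinOn_stdSimplex hx hmin hu a)
        (hA.mulVec_apply_le_of_isMinOn_stdSimplex hx hmin ha u)]
  rw [dotProduct, sum_congr rfl fun u _ => hterm u, ← sum_mul, hx.2, one_mul]

theorem Finset.sum_coe_sort_of_eq_zero {ι M : Type*} [Fintype ι] [AddCommMonoid M]
    (s : Finset ι) {f : ι → M} (hf : ∀ i ∉ s, f i = 0) : ∑ i : s, f i = ∑ i, f i :=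
  (sum_coe_sort s f).trans (sum_subset (subset_univ s) fun i _ hi => hf i hi)

theorem Matrix.dotProduct_submatrix_mulVec_of_eq_zero (A : Matrix ι ι ℝ) (s : Finset ι)
    {x : ι → ℝ} (hx : ∀ i ∉ s, x i = 0) :
    (fun i : s => x i) ⬝ᵥ A.submatrix (↑) (↑) *ᵥ (fun i : s => x i) = x ⬝ᵥ A *ᵥ x := by
  simp only [dotProduct, mulVec, submatrix_apply]
  rw [← sum_coe_sort_of_eq_zero s fun i hi => by rw [hx i hi, zero_mul]]
  congr! 2 with i
  exact sum_coe_sort_of_eq_zero s (f := fun j => A i j * x j) fun j hj => by rw [hx j hj, mul_zero]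

end QuadraticFormOnSimplex

namespace CRG

variable {V : Type} [Fintype V] [DecidableEq V]

noncomputable def toMatrix (K : CRG V) (p : ℝ) : Matrix V V ℝ :=
  Matrix.of (K.M p)

@[simp]
theorem toMatrix_apply (K : CRG V) (p : ℝ) (u v : V) : K.toMatrix p u v = K.M p u v :=
  rfl

theorem toMatrix_isSymm (K : CRG V) (p : ℝ) : (K.toMatrix p).IsSymm := by
  refine Matrix.IsSymm.ext fun u v => ?_
  rcases eq_or_ne u v with rfl | huv
  · rfl
  · simp only [toMatrix_apply, M, if_neg huv, if_neg huv.symm, K.ecolor_symm u v]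

theorem M_nonneg (K : CRG V) {p : ℝ} (hp0 : 0 ≤ p) (hp1 : p ≤ 1) (u v : V) : 0 ≤ K.M p u v := by
  unfold M
  split_ifs
  · exact hp0
  · linarith
  · cases K.ecolor u v <;> dsimp only <;> linarith

theorem M_self_of_black (K : CRG V) (p : ℝ) {v : V} (hv : K.vWhite v = false) :
    K.M p v v = 1 - p := by
  simp [M, hv]

theorem M_of_white (K : CRG V) (p : ℝ) {u v : V} (huv : u ≠ v)
    (hw : K.ecolor u v = EColor.white) : K.M p u v = p := by
  simp [M, huv, hw]

theorem toMatrix_sub (K : CRG V) (p : ℝ) (s : Finset V) :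
    (K.sub s).toMatrix p = (K.toMatrix p).submatrix (↑) (↑) := by
  ext u v
  simp only [toMatrix_apply, M, sub, Matrix.submatrix_apply, Subtype.ext_iff]

theorem g_eq_of_isMinOn (K : CRG V) (p : ℝ) {x : V → ℝ} (hx : x ∈ stdSimplex ℝ V)
    (hmin : IsMinOn (fun y => y ⬝ᵥ K.toMatrix p *ᵥ y) (stdSimplex ℝ V) x) :
    K.g p = x ⬝ᵥ K.toMatrix p *ᵥ x := by
  have hquad : ∀ y : V → ℝ, ∑ u, ∑ v, y u * K.M p u v * y v = y ⬝ᵥ K.toMatrix p *ᵥ y := fun y => by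
    simp only [dotProduct, mulVec, toMatrix_apply, mul_sum, mul_assoc]
  refine IsLeast.csInf_eq ⟨⟨x, hx.1, hx.2, (hquad x).symm⟩, ?_⟩
  rintro r ⟨y, hy0, hy1, rfl⟩
  exact (hquad y).symm ▸ hmin ⟨hy0, hy1⟩

theorem g_le [Nonempty V] (K : CRG V) (p : ℝ) {y : V → ℝ} (hy : y ∈ stdSimplex ℝ V) :
    K.g p ≤ y ⬝ᵥ K.toMatrix p *ᵥ y := by
  obtain ⟨x, hx, hmin⟩ := exists_isMinOn_dotProduct_mulVec_stdSimplex (K.toMatrix p)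
  exact K.g_eq_of_isMinOn p hx hmin ▸ hmin hy

/-- A minimiser of a `p`-core CRG vanishing somewhere would also be admissible for the proper
sub-CRG on its support, where `g` is strictly larger. -/
theorem IsPCore.pos_of_isMinOn {K : CRG V} {p : ℝ} (hcore : K.IsPCore p) {x : V → ℝ}
    (hx : x ∈ stdSimplex ℝ V) (hmin : IsMinOn (fun y => y ⬝ᵥ K.toMatrix p *ᵥ y) (stdSimplex ℝ V) x)
    (v : V) : 0 < x v := by
  refine (hx.1 v).lt_of_ne fun hv => ?_
  set s := univ.filter (x · ≠ 0)
  have hs : ∀ w ∉ s, x w = 0 := by simp [s]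
  have hsum : ∑ w : s, x w = 1 := (sum_coe_sort_of_eq_zero s hs).trans hx.2
  have hne : s.Nonempty := by
    by_contra h
    rw [not_nonempty_iff_eq_empty.mp h] at hsum
    simp at hsum
  have : Nonempty s := hne.to_subtype
  have hvs : v ∉ s := by simp [s, hv]
  have hlt := hcore s hne fun h => hvs (h ▸ mem_univ v)
  have hle := (K.sub s).g_le p (y := fun w : s => x w) ⟨fun w => hx.1 w, hsum⟩
  rw [toMatrix_sub, Matrix.dotProduct_submatrix_mulVec_of_eq_zero _ s hs,
    ← K.g_eq_of_isMinOn p hx hmin] at hle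
  exact hlt.not_ge hle

theorem p_lt_sum_mulVec_of_dominating {ι : Type*} [Fintype ι] (K : CRG V) {p : ℝ} (hp0 : 0 ≤ p)
    (hp : p < 1 / 2) (vs : ι → V) (hblack : ∀ i, K.vWhite (vs i) = false)
    (hdom : ∀ w ∉ Set.range vs, ∃ i, K.ecolor w (vs i) = EColor.white) {x : V → ℝ}
    (hx : x ∈ stdSimplex ℝ V) (i₀ : ι) (hx₀ : 0 < x (vs i₀)) :
    p < ∑ i, (K.toMatrix p *ᵥ x) (vs i) := by
  have hM0 := K.M_nonneg hp0 (by linarith)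
  have hcol : ∀ w, ∃ i, p ≤ K.M p (vs i) w := fun w => by
    by_cases hw : w ∈ Set.range vs
    · obtain ⟨i, rfl⟩ := hw
      exact ⟨i, by rw [K.M_self_of_black p (hblack i)]; linarith⟩
    · obtain ⟨i, hi⟩ := hdom w hw
      exact ⟨i, (K.M_of_white p (fun h => hw ⟨i, h⟩) (K.ecolor_symm _ _ ▸ hi)).ge⟩
  calc p = ∑ w, p * x w := by rw [← mul_sum, hx.2, mul_one]
    _ < ∑ w, (∑ i, K.M p (vs i) w) * x w := by
      refine sum_lt_sum (fun w _ => ?_) ⟨vs i₀, mem_univ _, ?_⟩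
      · obtain ⟨i, hi⟩ := hcol w
        exact mul_le_mul_of_nonneg_right
          (hi.trans (single_le_sum (fun j _ => hM0 _ _) (mem_univ i))) (hx.1 w)
      · refine mul_lt_mul_of_pos_right (lt_of_lt_of_le ?_
          (single_le_sum (fun j _ => hM0 _ _) (mem_univ i₀))) hx₀
        rw [K.M_self_of_black p (hblack i₀)]
        linarith
    _ = ∑ i, (K.toMatrix p *ᵥ x) (vs i) := by
      simp only [mulVec, dotProduct, toMatrix_apply, sum_mul]
      exact sum_comm

end CRG

theorem g_gt_p_div_card_of_maximal_gray_clique_general {V : Type} [Fintype V] [DecidableEq V] [Nonempty V]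
    (p : ℝ) (hp : p ∈ Set.Ioo (0 : ℝ) (1 / 2))
    (K : CRG V) (hcore : K.IsPCore p)
    (hblack : ∀ v : V, K.vWhite v = false)
    (ℓ : ℕ) (vs : Fin ℓ → V)
    (hmaximal : ∀ w : V, w ∉ Set.range vs → ∃ i : Fin ℓ, K.ecolor w (vs i) = EColor.white) :
    p / (ℓ : ℝ) < K.g p := by
  have hℓ : 0 < ℓ := Nat.pos_of_ne_zero fun h => by
    subst h
    obtain ⟨i, -⟩ := hmaximal (Classical.arbitrary V) fun ⟨i, _⟩ => i.elim0
    exact i.elim0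
  obtain ⟨x, hx, hmin⟩ := exists_isMinOn_dotProduct_mulVec_stdSimplex (K.toMatrix p)
  have hpos := hcore.pos_of_isMinOn hx hmin
  have hrow : ∀ i, (K.toMatrix p *ᵥ x) (vs i) = K.g p := fun i => by
    rw [K.g_eq_of_isMinOn p hx hmin]
    exact (K.toMatrix_isSymm p).mulVec_apply_eq_of_isMinOn_stdSimplex hx hmin (hpos _)
  have hsum := K.p_lt_sum_mulVec_of_dominating hp.1.le hp.2 vs (fun i => hblack _) hmaximal hx
    ⟨0, hℓ⟩ (hpos _)
  rw [div_lt_iff₀ (by exact_mod_cast hℓ)]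
  simpa [hrow, mul_comm] using hsum

theorem g_gt_p_div_card_of_maximal_gray_clique {V : Type} [Fintype V] [DecidableEq V] [Nonempty V]
    (p : ℝ) (hp : p ∈ Set.Ioo (0 : ℝ) (1 / 2))
    (K : CRG V) (hcore : K.IsPCore p)
    (hblack : ∀ v : V, K.vWhite v = false)
    (ℓ : ℕ) (vs : Fin ℓ → V) (hinj : Function.Injective vs)
    (hgray : ∀ i j : Fin ℓ, i ≠ j → K.ecolor (vs i) (vs j) = EColor.gray)
    (hmaximal : ∀ w : V, w ∉ Set.range vs → ∃ i : Fin ℓ, K.ecolor w (vs i) = EColor.white) :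
    p / (ℓ : ℝ) < K.g p :=
  g_gt_p_div_card_of_maximal_gray_clique_general p hp K hcore hblack ℓ vs hmaximal
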